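/- Let R be a commutative ring. The relation F ∼ G on noncommutative formal power series with invertible constant coefficient in one complex parameter τ (defined by: FG⁻¹ has each non-constant coefficient of size O(|τ|^{1−ε}) as τ → 0, for every ε > 0) is an equivalence relation compatible with products, provided all series involved have logarithmic growth (each coefficient is O(log^r|τ|) for some r as τ → 0). In particular, the classes of series with logarithmic growth and of series asymptotic to 1 are stable under products and inversion. -/

import Mathlib

/-!
Coefficientwise, everything reduces to statements about functions of `τ` near `0`. The
functions of logarithmic growth form a ring, and those that are `O(|τ|^{1-ε})` for every
`ε > 0` form an ideal of it, because `log^r |τ| = O(|τ|^{-ε})`. Since the coefficients of a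
product (and, via `F⁻¹ = Σ (-1)^k (F - 1)^k`, of an inverse) are polynomials in those of the
factors, congruence modulo this ideal is compatible with products of series of logarithmic
growth. For such series with constant coefficient `1`, `F ∼ G` says exactly that `F - G` has
coefficients in the ideal: `F·G⁻¹ ≡ G·G⁻¹ = 1` and conversely `F = (F·G⁻¹)·G ≡ G`. Hence `∼`
is an equivalence compatible with products, and `F ≡ 1` gives `F⁻¹ = F⁻¹·1 ≡ F⁻¹·F = 1`.
-/

open Filter Asymptotics
open scoped Topology

/-- The (concatenation) product of noncommutative formal power series, given by their
coefficient functions on words. -/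
noncomputable def convMul {α : Type*} (A B : List α → ℂ) : List α → ℂ :=
  fun w => ∑ k ∈ Finset.range (w.length + 1), A (w.take k) * B (w.drop k)

/-- The unit series `1`. -/
def deltaOne {α : Type*} : List α → ℂ :=
  fun w => match w with
  | [] => 1
  | _ :: _ => 0

/-- Concatenation powers of a series. -/
noncomputable def convPow {α : Type*} (F : List α → ℂ) : ℕ → List α → ℂ
  | 0 => deltaOne
  | k + 1 => convMul F (convPow F k)

/-- The inverse `F⁻¹ = Σ_k (−1)^k (F−1)^k` of a series with constant coefficient `1`
(coefficientwise, the sum is finite). -/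
noncomputable def convInv {α : Type*} (F : List α → ℂ) : List α → ℂ :=
  fun w => ∑ k ∈ Finset.range (w.length + 1),
    (-1 : ℂ) ^ k * convPow (fun u => F u - deltaOne u) k w

/-- A `τ`-dependent series has logarithmic growth if each coefficient is
`O(log^r |τ|)` for some `r`, as `τ → 0`. -/
def LogGrowth {n : ℕ} (F : ℂ → List (Fin (n + 1)) → ℂ) : Prop :=
  ∀ w : List (Fin (n + 1)), ∃ r : ℕ,
    (fun τ => F τ w) =O[𝓝[≠] (0 : ℂ)] fun τ => Real.log (‖τ‖) ^ r

/-- A `τ`-dependent series (with constant coefficient `1`) is asymptotic to `1` if each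
non-constant coefficient is `O(|τ|^{1−ε})` for every `ε > 0`, as `τ → 0`. -/
def AsympOne {n : ℕ} (F : ℂ → List (Fin (n + 1)) → ℂ) : Prop :=
  ∀ w : List (Fin (n + 1)), w ≠ [] → ∀ ε : ℝ, 0 < ε →
    (fun τ => F τ w) =O[𝓝[≠] (0 : ℂ)] fun τ => ‖τ‖ ^ (1 - ε)

/-- The relation `F ∼ G` (as `τ → 0`): `F·G⁻¹` is asymptotic to `1`. -/
noncomputable def SRel {n : ℕ} (F G : ℂ → List (Fin (n + 1)) → ℂ) : Prop :=
  AsympOne fun τ => convMul (F τ) (convInv (G τ))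


section Algebra

variable {α : Type*}

lemma deltaOne_of_ne_nil {w : List α} (hw : w ≠ []) : (deltaOne : List α → ℂ) w = 0 := by
  cases w with
  | nil => exact absurd rfl hw
  | cons _ _ => rfl

lemma convMul_nil_eq_one {A B : List α → ℂ} (hA : A [] = 1) (hB : B [] = 1) :
    convMul A B [] = 1 := by
  simp [convMul, hA, hB]

lemma one_convMul (A : List α → ℂ) : convMul deltaOne A = A := by
  funext w
  rw [convMul, Finset.sum_eq_single 0 (fun k hk hk0 => ?_) (by simp)]
  · simp [deltaOne]
  · rw [deltaOne_of_ne_nil, zero_mul]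
    rw [Finset.mem_range] at hk
    rw [ne_eq, List.take_eq_nil_iff]
    rintro (rfl | rfl)
    · exact hk0 rfl
    · simp at hk
      omega

lemma convMul_one (A : List α → ℂ) : convMul A deltaOne = A := by
  funext w
  rw [convMul, Finset.sum_eq_single w.length (fun k hk hkw => ?_) (by simp)]
  · simp [deltaOne]
  · rw [deltaOne_of_ne_nil, mul_zero]
    rw [Finset.mem_range] at hk
    simp only [ne_eq, List.drop_eq_nil_iff]
    omega

lemma add_convMul (A B C : List α → ℂ) : convMul (A + B) C = convMul A C + convMul B C := by
  funext w
  simp [convMul, add_mul, Finset.sum_add_distrib]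

lemma convMul_assoc (A B C : List α → ℂ) :
    convMul (convMul A B) C = convMul A (convMul B C) := by
  funext w
  set L := w.length
  let term (j k : ℕ) : ℂ := A (w.take j) * B ((w.drop j).take (k - j)) * C (w.drop k)
  have lhs : convMul (convMul A B) C w = ∑ k ∈ Finset.Ico 0 (L + 1), ∑ j ∈ Finset.Ico 0 (k + 1),
      term j k := by
    rw [convMul, ← Finset.range_eq_Ico]
    refine Finset.sum_congr rfl fun k hk => ?_
    rw [Finset.mem_range] at hk
    rw [convMul, Finset.sum_mul, ← Finset.range_eq_Ico, List.length_take, min_eq_left (by omega)]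
    refine Finset.sum_congr rfl fun j hj => ?_
    rw [Finset.mem_range] at hj
    rw [List.take_take, min_eq_left (by omega), List.drop_take]
  have rhs : convMul A (convMul B C) w = ∑ j ∈ Finset.Ico 0 (L + 1), ∑ k ∈ Finset.Ico j (L + 1),
      term j k := by
    rw [convMul, ← Finset.range_eq_Ico]
    refine Finset.sum_congr rfl fun j hj => ?_
    rw [Finset.mem_range] at hj
    rw [convMul, Finset.mul_sum, Finset.sum_Ico_eq_sum_range, List.length_drop,
      show L + 1 - j = L - j + 1 by omega]
    refine Finset.sum_congr rfl fun i _ => ?_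
    simp only [term, Nat.add_sub_cancel_left, List.drop_drop, mul_assoc]
  rw [lhs, rhs, Finset.sum_Ico_Ico_comm]

lemma convPow_eq_zero_of_length_lt {E : List α → ℂ} (hE : E [] = 0) :
    ∀ (k : ℕ) (w : List α), w.length < k → convPow E k w = 0
  | 0, _, hw => absurd hw (Nat.not_lt_zero _)
  | k + 1, w, hw => by
    rw [convPow, convMul]
    refine Finset.sum_eq_zero fun j hj => ?_
    rw [Finset.mem_range] at hj
    rcases Nat.eq_zero_or_pos j with rfl | hj0
    · simp [hE]
    · rw [convPow_eq_zero_of_length_lt hE k (w.drop j) (by rw [List.length_drop]; omega), mul_zero]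

lemma convInv_eq_sum_range {F : List α → ℂ} (hF : F [] = 1) {w : List α} {N : ℕ}
    (hN : w.length ≤ N) :
    convInv F w = ∑ k ∈ Finset.range (N + 1),
      (-1 : ℂ) ^ k * convPow (fun u => F u - deltaOne u) k w := by
  refine Finset.sum_subset (Finset.range_subset_range.2 (by omega)) fun k hk hkw => ?_
  rw [Finset.mem_range] at hk hkw
  rw [convPow_eq_zero_of_length_lt (by simp [hF, deltaOne]) k w (by omega), mul_zero]

lemma convInv_nil (F : List α → ℂ) : convInv F [] = 1 := by
  simp [convInv, convPow, deltaOne]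

/-- Writing `F = 1 + E`, the product `E · F⁻¹` is `Σ (-1)^k E^(k+1)`, which telescopes against
`F⁻¹ = Σ (-1)^k E^k`. -/
lemma convMul_convInv {F : List α → ℂ} (hF : F [] = 1) : convMul F (convInv F) = deltaOne := by
  set E : List α → ℂ := fun u => F u - deltaOne u
  have hFE : F = deltaOne + E := by funext u; simp [E]
  funext w
  have hE_inv : convMul E (convInv F) w
      = ∑ k ∈ Finset.range (w.length + 1), (-1 : ℂ) ^ k * convPow E (k + 1) w := by
    rw [convMul, Finset.sum_congr rfl fun j _ => by
      rw [convInv_eq_sum_range hF (N := w.length) (by simp), Finset.mul_sum], Finset.sum_comm]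
    refine Finset.sum_congr rfl fun k _ => ?_
    simp only [convPow, convMul, Finset.mul_sum]
    exact Finset.sum_congr rfl fun j _ => by ring
  have hinv : convInv F w
      = deltaOne w - ∑ k ∈ Finset.range (w.length + 1), (-1 : ℂ) ^ k * convPow E (k + 1) w := by
    rw [convInv_eq_sum_range hF (N := w.length + 1) (by omega), Finset.sum_range_succ']
    simp only [pow_succ, mul_neg_one, neg_mul, Finset.sum_neg_distrib, pow_zero, one_mul]
    rw [neg_add_eq_sub]
    rfl
  nth_rw 1 [hFE]
  rw [add_convMul, one_convMul, Pi.add_apply, hE_inv, hinv, sub_add_cancel]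

lemma convInv_convMul {F : List α → ℂ} (hF : F [] = 1) : convMul (convInv F) F = deltaOne := by
  have hinv := convMul_convInv (convInv_nil F)
  have hF_eq : F = convInv (convInv F) := by
    calc F = convMul F (convMul (convInv F) (convInv (convInv F))) := by
          rw [hinv, convMul_one]
      _ = convInv (convInv F) := by rw [← convMul_assoc, convMul_convInv hF, one_convMul]
  rwa [← hF_eq] at hinv

end Algebra

lemma log_norm_pow_isBigO_log_norm_pow {r s : ℕ} (hrs : r ≤ s) :
    (fun τ : ℂ => Real.log ‖τ‖ ^ r) =O[𝓝[≠] 0] fun τ => Real.log ‖τ‖ ^ s := by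
  have hlog := (Real.tendsto_log_nhdsGT_zero.comp (tendsto_norm_nhdsNE_zero (E := ℂ))).eventually
    (eventually_le_atBot (-1))
  refine IsBigO.of_bound 1 ?_
  filter_upwards [hlog] with τ (hτ : Real.log ‖τ‖ ≤ -1)
  have h1 : 1 ≤ ‖Real.log ‖τ‖‖ := by
    rw [Real.norm_eq_abs, abs_of_neg (by linarith)]
    linarith
  rw [one_mul, norm_pow, norm_pow]
  exact pow_le_pow_right₀ h1 hrs

lemma log_norm_pow_isBigO_rpow (r : ℕ) {s : ℝ} (hs : s < 0) :
    (fun τ : ℂ => Real.log ‖τ‖ ^ r) =O[𝓝[≠] 0] fun τ => ‖τ‖ ^ s := by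
  rw [← isBigO_abs_left]
  simpa [abs_pow, Function.comp_def] using
    (isLittleO_abs_log_rpow_rpow_nhdsGT_zero r hs).isBigO.comp_tendsto tendsto_norm_nhdsNE_zero

def logGrowthSubring : Subring (ℂ → ℂ) where
  carrier := {f | ∃ r : ℕ, f =O[𝓝[≠] (0 : ℂ)] fun τ => Real.log ‖τ‖ ^ r}
  mul_mem' := by
    rintro f g ⟨r, hf⟩ ⟨s, hg⟩
    exact ⟨r + s, by simpa only [pow_add, Pi.mul_def] using hf.mul hg⟩
  one_mem' := ⟨0, by simpa using isBigO_const_one ℝ (1 : ℂ) _⟩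
  add_mem' := by
    rintro f g ⟨r, hf⟩ ⟨s, hg⟩
    exact ⟨max r s, (hf.trans (log_norm_pow_isBigO_log_norm_pow (le_max_left r s))).add
      (hg.trans (log_norm_pow_isBigO_log_norm_pow (le_max_right r s)))⟩
  zero_mem' := ⟨0, isBigO_zero _ _⟩
  neg_mem' := by
    rintro f ⟨r, hf⟩
    exact ⟨r, hf.neg_left⟩

lemma const_mem_logGrowthSubring (c : ℂ) : (fun _ => c) ∈ logGrowthSubring :=
  ⟨0, by simpa using isBigO_const_one ℝ c _⟩

def asympZero : AddSubgroup (ℂ → ℂ) where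
  carrier := {f | ∀ ε : ℝ, 0 < ε → f =O[𝓝[≠] (0 : ℂ)] fun τ => ‖τ‖ ^ (1 - ε)}
  zero_mem' := fun _ _ => isBigO_zero _ _
  add_mem' := fun hf hg ε hε => (hf ε hε).add (hg ε hε)
  neg_mem' := fun hf ε hε => (hf ε hε).neg_left

/-- `log^r |τ| = O(|τ|^{-ε/2})`, so the product is `O(|τ|^{1-ε/2} |τ|^{-ε/2})`. -/
lemma mul_mem_asympZero {f g : ℂ → ℂ} (hf : f ∈ logGrowthSubring) (hg : g ∈ asympZero) :
    f * g ∈ asympZero := by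
  obtain ⟨r, hf⟩ := hf
  intro ε hε
  have hfg := (hf.trans (log_norm_pow_isBigO_rpow r (by linarith : -(ε / 2) < 0))).mul
    (hg (ε / 2) (by linarith))
  refine hfg.congr' EventuallyEq.rfl ?_
  filter_upwards [self_mem_nhdsWithin] with τ hτ
  rw [← Real.rpow_add (norm_pos_iff.2 hτ)]
  ring_nf

section Families

variable {α : Type*}

lemma coeff_convMul (A B : ℂ → List α → ℂ) (w : List α) :
    (fun τ => convMul (A τ) (B τ) w) =
      ∑ k ∈ Finset.range (w.length + 1), (fun τ => A τ (w.take k)) * fun τ => B τ (w.drop k) := by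
  funext τ
  simp [convMul, Finset.sum_apply]

lemma coeff_convInv (F : ℂ → List α → ℂ) (w : List α) :
    (fun τ => convInv (F τ) w) =
      ∑ k ∈ Finset.range (w.length + 1),
        (fun _ => (-1 : ℂ) ^ k) * fun τ => convPow (fun u => F τ u - deltaOne u) k w := by
  funext τ
  simp [convInv, Finset.sum_apply]

def AsympEq (F G : ℂ → List α → ℂ) : Prop :=
  ∀ w, (fun τ => F τ w) - (fun τ => G τ w) ∈ asympZero

lemma AsympEq.refl (F : ℂ → List α → ℂ) : AsympEq F F := fun w => by
  rw [sub_self]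
  exact zero_mem _

lemma AsympEq.symm {F G : ℂ → List α → ℂ} (h : AsympEq F G) : AsympEq G F := fun w => by
  rw [← neg_sub]
  exact neg_mem (h w)

lemma AsympEq.trans {F G H : ℂ → List α → ℂ} (hFG : AsympEq F G) (hGH : AsympEq G H) :
    AsympEq F H := fun w => by
  rw [← sub_add_sub_cancel _ (fun τ => G τ w)]
  exact add_mem (hFG w) (hGH w)

end Families

section Series

variable {n : ℕ}

lemma logGrowth_iff {F : ℂ → List (Fin (n + 1)) → ℂ} :
    LogGrowth F ↔ ∀ w, (fun τ => F τ w) ∈ logGrowthSubring :=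
  Iff.rfl

lemma logGrowth_const (A : List (Fin (n + 1)) → ℂ) : LogGrowth fun _ => A :=
  fun w => const_mem_logGrowthSubring (A w)

lemma LogGrowth.convMul {A B : ℂ → List (Fin (n + 1)) → ℂ} (hA : LogGrowth A)
    (hB : LogGrowth B) : LogGrowth fun τ => convMul (A τ) (B τ) := logGrowth_iff.2 fun w => by
  rw [coeff_convMul]
  exact sum_mem fun k _ => mul_mem (hA _) (hB _)

lemma LogGrowth.convPow {A : ℂ → List (Fin (n + 1)) → ℂ} (hA : LogGrowth A) :
    ∀ k, LogGrowth fun τ => convPow (A τ) k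
  | 0 => logGrowth_const deltaOne
  | k + 1 => hA.convMul (hA.convPow k)

lemma LogGrowth.sub_one {F : ℂ → List (Fin (n + 1)) → ℂ} (hF : LogGrowth F) :
    LogGrowth fun τ u => F τ u - deltaOne u :=
  logGrowth_iff.2 fun w => sub_mem (hF w) (logGrowth_const deltaOne w)

lemma LogGrowth.convInv {F : ℂ → List (Fin (n + 1)) → ℂ} (hF : LogGrowth F) :
    LogGrowth fun τ => convInv (F τ) := logGrowth_iff.2 fun w => by
  rw [coeff_convInv]
  exact sum_mem fun k _ => mul_mem (const_mem_logGrowthSubring _) (hF.sub_one.convPow k w)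

lemma AsympEq.convMul {A A' B B' : ℂ → List (Fin (n + 1)) → ℂ} (hA : AsympEq A A')
    (hB : AsympEq B B') (hA'log : LogGrowth A') (hBlog : LogGrowth B) :
    AsympEq (fun τ => convMul (A τ) (B τ)) (fun τ => convMul (A' τ) (B' τ)) := fun w => by
  rw [coeff_convMul, coeff_convMul, ← Finset.sum_sub_distrib]
  refine sum_mem fun k _ => ?_
  rw [show ∀ a a' b b' : ℂ → ℂ, a * b - a' * b' = b * (a - a') + a' * (b - b') from
    fun _ _ _ _ => by ring]
  exact add_mem (mul_mem_asympZero (hBlog _) (hA _)) (mul_mem_asympZero (hA'log _) (hB _))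

lemma asympOne_iff_asympEq_one {F : ℂ → List (Fin (n + 1)) → ℂ} (hF1 : ∀ τ, F τ [] = 1) :
    AsympOne F ↔ AsympEq F fun _ => deltaOne := by
  constructor
  · rintro hF (_ | ⟨a, w⟩)
    · simp only [hF1, deltaOne, sub_self]
      exact zero_mem _
    · simp only [deltaOne, ← Pi.zero_def, sub_zero]
      exact hF _ (List.cons_ne_nil a w)
  · intro hF w hw
    have hFw := hF w
    simp only [deltaOne_of_ne_nil hw, ← Pi.zero_def, sub_zero] at hFw
    exact hFw

lemma AsympOne.convMul {F G : ℂ → List (Fin (n + 1)) → ℂ} (hF1 : ∀ τ, F τ [] = 1)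
    (hG1 : ∀ τ, G τ [] = 1) (hGlog : LogGrowth G) (hF : AsympOne F) (hG : AsympOne G) :
    AsympOne fun τ => convMul (F τ) (G τ) := by
  rw [asympOne_iff_asympEq_one fun τ => convMul_nil_eq_one (hF1 τ) (hG1 τ)]
  simpa only [one_convMul] using ((asympOne_iff_asympEq_one hF1).1 hF).convMul
    ((asympOne_iff_asympEq_one hG1).1 hG) (logGrowth_const deltaOne) hGlog

lemma AsympOne.convInv {F : ℂ → List (Fin (n + 1)) → ℂ} (hF1 : ∀ τ, F τ [] = 1)
    (hFlog : LogGrowth F) (hF : AsympOne F) : AsympOne fun τ => convInv (F τ) := by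
  rw [asympOne_iff_asympEq_one fun τ => convInv_nil (F τ)]
  simpa only [convMul_one, convInv_convMul (hF1 _)] using
    (AsympEq.refl _).convMul ((asympOne_iff_asympEq_one hF1).1 hF).symm
      hFlog.convInv (logGrowth_const deltaOne)

lemma srel_iff_asympEq {F G : ℂ → List (Fin (n + 1)) → ℂ} (hF1 : ∀ τ, F τ [] = 1)
    (hG1 : ∀ τ, G τ [] = 1) (hGlog : LogGrowth G) :
    SRel F G ↔ AsympEq F G := by
  rw [SRel, asympOne_iff_asympEq_one fun τ => convMul_nil_eq_one (hF1 τ) (convInv_nil (G τ))]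
  constructor
  · intro h
    simpa only [convMul_assoc, convInv_convMul (hG1 _), convMul_one, one_convMul] using
      h.convMul (.refl G) (logGrowth_const deltaOne) hGlog
  · intro h
    simpa only [convMul_convInv (hG1 _)] using
      h.convMul (.refl fun τ => convInv (G τ)) hGlog hGlog.convInv

end Series

/-- for series with constant coefficient `1` and logarithmic growth,
the relation `F ∼ G ⇔ FG⁻¹ asymptotic to 1` is an equivalence relation compatible with
products; moreover the classes of series with logarithmic growth and of series asymptotic
to `1` are stable under products and inversion. -/
theorem stmt19 {n : ℕ} (F G H F' G' : ℂ → List (Fin (n + 1)) → ℂ)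
    (hF1 : ∀ τ, F τ [] = 1) (hG1 : ∀ τ, G τ [] = 1) (hH1 : ∀ τ, H τ [] = 1)
    (hF'1 : ∀ τ, F' τ [] = 1) (hG'1 : ∀ τ, G' τ [] = 1)
    (hFlog : LogGrowth F) (hGlog : LogGrowth G) (hHlog : LogGrowth H)
    (hF'log : LogGrowth F') (hG'log : LogGrowth G') :
    SRel F F ∧
      (SRel F G → SRel G F) ∧
      (SRel F G → SRel G H → SRel F H) ∧
      (SRel F F' → SRel G G' →
        SRel (fun τ => convMul (F τ) (G τ)) (fun τ => convMul (F' τ) (G' τ))) ∧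
      LogGrowth (fun τ => convMul (F τ) (G τ)) ∧
      LogGrowth (fun τ => convInv (F τ)) ∧
      (AsympOne F → AsympOne G → AsympOne (fun τ => convMul (F τ) (G τ))) ∧
      (AsympOne F → AsympOne (fun τ => convInv (F τ))) := by
  have hFF := srel_iff_asympEq hF1 hF1 hFlog
  have hFG := srel_iff_asympEq hF1 hG1 hGlog
  have hGF := srel_iff_asympEq hG1 hF1 hFlog
  have hGH := srel_iff_asympEq hG1 hH1 hHlog
  have hFH := srel_iff_asympEq hF1 hH1 hHlog
  have hFF' := srel_iff_asympEq hF1 hF'1 hF'log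
  have hGG' := srel_iff_asympEq hG1 hG'1 hG'log
  have hprod := srel_iff_asympEq (fun τ => convMul_nil_eq_one (hF1 τ) (hG1 τ))
    (fun τ => convMul_nil_eq_one (hF'1 τ) (hG'1 τ)) (hF'log.convMul hG'log)
  refine ⟨hFF.2 (.refl F), fun h => hGF.2 (hFG.1 h).symm,
    fun h h' => hFH.2 ((hFG.1 h).trans (hGH.1 h')),
    fun h h' => hprod.2 ((hFF'.1 h).convMul (hGG'.1 h') hF'log hGlog),
    hFlog.convMul hGlog, hFlog.convInv, AsympOne.convMul hF1 hG1 hGlog,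
    AsympOne.convInv hF1 hFlog⟩
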